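/- arXiv:1307.4904 — 5 statements merged into one kernel-verified Lean document; each statement's English description precedes it below -/
import Mathlib

section
/- For every nonzero f ∈ L²(ℝ) with x·f(x) ∈ L²(ℝ), and every δ > 0 and a, b ∈ ℂ: ‖(A_δ - a)f‖₂ · ‖(B - b)f‖₂ ≥ (1/2)|⟨f(· - δ), f⟩|, where A_δ f(x) = (f(x)-f(x-δ))/δ and Bf(x) = x f(x). -/
/-!
Write `A = A_δ`, `B` for multiplication by `x` and `T f = f (· - δ)`. The adjoint of `A` is
`A* f = (f - f (· + δ)) / δ`, the commutator `[A, B]` is `T`, and `A` is normal, so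
`‖(A* - ā) f‖ = ‖(A - a) f‖`; also `‖(B - b̄) f‖ = ‖(B - b) f‖`. Robertson's argument gives
`⟨T f, f⟩ = ⟨(B - b) f, (A* - ā) f⟩ - ⟨(A - a) f, (B - b̄) f⟩`, and Cauchy–Schwarz bounds each
term by `‖(A - a) f‖ ‖(B - b) f‖`.

Both identities hold pointwise up to a coboundary `φ (x - δ) - φ x` of an integrable `φ`, whose
integral vanishes by translation invariance of Lebesgue measure.
-/

open MeasureTheory ComplexConjugate

theorem MeasureTheory.MemLp.div_const {α 𝕜 : Type*} [MeasurableSpace α] [NormedDivisionRing 𝕜]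
    {μ : Measure α} {p : ENNReal} {f : α → 𝕜} (hf : MemLp f p μ) (c : 𝕜) :
    MemLp (fun x => f x / c) p μ := by
  simpa only [div_eq_mul_inv] using hf.mul_const c⁻¹

theorem norm_integral_mul_conj_le {α 𝕜 : Type*} [MeasurableSpace α] [RCLike 𝕜] {μ : Measure α}
    {g h : α → 𝕜} (hg : MemLp g 2 μ) (hh : MemLp h 2 μ) :
    ‖∫ x, g x * conj (h x) ∂μ‖
      ≤ (∫ x, ‖g x‖ ^ 2 ∂μ) ^ (1 / 2 : ℝ) * (∫ x, ‖h x‖ ^ 2 ∂μ) ^ (1 / 2 : ℝ) := by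
  have holder := integral_mul_norm_le_Lp_mul_Lq Real.HolderConjugate.two_two
    (by simpa using hg) (by simpa using hh)
  simp only [Real.rpow_two] at holder
  calc ‖∫ x, g x * conj (h x) ∂μ‖ ≤ ∫ x, ‖g x * conj (h x)‖ ∂μ := norm_integral_le_integral_norm _
    _ = ∫ x, ‖g x‖ * ‖h x‖ ∂μ := by simp only [norm_mul, RCLike.norm_conj]
    _ ≤ _ := holder

theorem integral_add_coboundary {G E : Type*} [NormedAddCommGroup E] [NormedSpace ℝ E]
    [MeasurableSpace G] [AddGroup G] [MeasurableAdd G] {μ : Measure G} [μ.IsAddRightInvariant]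
    {g φ : G → E} (hg : Integrable g μ) (hφ : Integrable φ μ) (c : G) :
    ∫ x, (g x + (φ (x - c) - φ x)) ∂μ = ∫ x, g x ∂μ := by
  have hφc : Integrable (fun x => φ (x - c)) μ := hφ.comp_sub_right c
  have hcob : Integrable (fun x => φ (x - c) - φ x) μ := hφc.sub hφ
  rw [integral_add hg hcob, integral_sub hφc hφ, integral_sub_right_eq_self φ c, sub_self,
    add_zero]

/-- With `p = f x`, `q = f (x - δ)`, `r = f (x + δ)`: `‖(A - a) f‖²` and `‖(A* - ā) f‖²` differ
pointwise by a coboundary. -/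
theorem norm_sq_backwardDiff_sub_eq (p q r a : ℂ) (δ : ℝ) :
    ‖(p - q) / δ - a * p‖ ^ 2 = ‖(p - r) / δ - conj a * p‖ ^ 2
      + ((‖p - q‖ ^ 2 / δ ^ 2 + 2 * (conj a * (q * conj p)).re / δ)
        - (‖r - p‖ ^ 2 / δ ^ 2 + 2 * (conj a * (p * conj r)).re / δ)) := by
  simp only [Complex.sq_norm, Complex.normSq_apply, Complex.sub_re, Complex.sub_im,
    Complex.div_ofReal_re, Complex.div_ofReal_im, Complex.mul_re, Complex.mul_im, Complex.conj_re,
    Complex.conj_im]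
  ring

/-- Same encoding: Robertson's identity for `⟨T f, f⟩` holds pointwise up to a coboundary. -/
theorem backwardDiff_commutator_eq (p q r a b : ℂ) (x : ℝ) {δ : ℝ} (hδ : δ ≠ 0) :
    (x * p - b * p) * conj ((p - r) / δ - conj a * p)
        - ((p - q) / δ - a * p) * conj (x * p - conj b * p)
      = q * conj p
        + ((((x - δ : ℝ) : ℂ) * q - b * q) / δ * conj p - (x * p - b * p) / δ * conj r) := by
  have hδc : (δ : ℂ) ≠ 0 := Complex.ofReal_ne_zero.2 hδ
  simp only [map_sub, map_mul, map_div₀, Complex.conj_conj, Complex.conj_ofReal]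
  push_cast
  field_simp
  ring

section BackwardDifference

variable {f : ℝ → ℂ}

theorem memLp_backwardDiff_sub (hf : MemLp f 2) (δ : ℝ) (a : ℂ) :
    MemLp (fun x => (f x - f (x - δ)) / δ - a * f x) 2 :=
  ((hf.sub (hf.comp_measurePreserving (measurePreserving_sub_right volume δ))).div_const _).sub
    (hf.const_mul a)

theorem memLp_forwardDiff_sub (hf : MemLp f 2) (δ : ℝ) (a : ℂ) :
    MemLp (fun x => (f x - f (x + δ)) / δ - a * f x) 2 :=
  ((hf.sub (hf.comp_measurePreserving (measurePreserving_add_right volume δ))).div_const _).sub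
    (hf.const_mul a)

theorem memLp_ofReal_mul_sub_mul {μ : Measure ℝ} (hf : MemLp f 2 μ)
    (hxf : MemLp (fun x : ℝ => (x : ℂ) * f x) 2 μ) (c : ℂ) :
    MemLp (fun x : ℝ => (x : ℂ) * f x - c * f x) 2 μ :=
  hxf.sub (hf.const_mul c)

theorem integral_norm_sq_backwardDiff_sub_eq (hf : MemLp f 2) (δ : ℝ) (a : ℂ) :
    ∫ x, ‖(f x - f (x - δ)) / δ - a * f x‖ ^ 2
      = ∫ x, ‖(f x - f (x + δ)) / δ - conj a * f x‖ ^ 2 := by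
  have hf' : MemLp (fun x => f (x + δ)) 2 :=
    hf.comp_measurePreserving (measurePreserving_add_right volume δ)
  have hζ : Integrable (fun y => ‖f (y + δ) - f y‖ ^ 2 / δ ^ 2
      + 2 * (conj a * (f y * conj (f (y + δ)))).re / δ) :=
    (((hf'.sub hf).integrable_norm_pow two_ne_zero).div_const _).add
      ((((hf.integrable_mul hf'.star).const_mul (conj a)).re.const_mul 2).div_const δ)
  rw [← integral_add_coboundary
    ((memLp_forwardDiff_sub hf δ (conj a)).integrable_norm_pow two_ne_zero) hζ δ]
  refine integral_congr_ae (.of_forall fun x => ?_)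
  simp only [sub_add_cancel]
  exact norm_sq_backwardDiff_sub_eq _ _ _ a δ

theorem integral_comp_sub_mul_conj_eq (hδ : δ ≠ 0) (hf : MemLp f 2)
    (hxf : MemLp (fun x : ℝ => (x : ℂ) * f x) 2) (a b : ℂ) :
    ∫ x, f (x - δ) * conj (f x)
      = (∫ x : ℝ, ((x : ℂ) * f x - b * f x) * conj ((f x - f (x + δ)) / δ - conj a * f x))
        - ∫ x : ℝ, ((f x - f (x - δ)) / δ - a * f x) * conj ((x : ℂ) * f x - conj b * f x) := by
  have hf' : MemLp (fun x => f (x + δ)) 2 :=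
    hf.comp_measurePreserving (measurePreserving_add_right volume δ)
  have hTf : MemLp (fun x => f (x - δ)) 2 :=
    hf.comp_measurePreserving (measurePreserving_sub_right volume δ)
  have hv := memLp_ofReal_mul_sub_mul hf hxf b
  have hvw : Integrable (fun x : ℝ =>
      ((x : ℂ) * f x - b * f x) * conj ((f x - f (x + δ)) / δ - conj a * f x)) :=
    hv.integrable_mul (memLp_forwardDiff_sub hf δ (conj a)).star
  have huv : Integrable (fun x : ℝ =>
      ((f x - f (x - δ)) / δ - a * f x) * conj ((x : ℂ) * f x - conj b * f x)) :=
    (memLp_backwardDiff_sub hf δ a).integrable_mul (memLp_ofReal_mul_sub_mul hf hxf (conj b)).star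
  have hTff : Integrable (fun x => f (x - δ) * conj (f x)) := hTf.integrable_mul hf.star
  have hφ : Integrable (fun y : ℝ => ((y : ℂ) * f y - b * f y) / δ * conj (f (y + δ))) :=
    (hv.div_const _).integrable_mul hf'.star
  rw [← integral_sub hvw huv, ← integral_add_coboundary hTff hφ δ]
  refine integral_congr_ae (.of_forall fun x => ?_)
  simp only [sub_add_cancel]
  exact (backwardDiff_commutator_eq _ _ _ a b x hδ).symm

end BackwardDifference

theorem uncertainty_backward_difference_general
    (δ : ℝ) (hδ : 0 < δ) (f : ℝ → ℂ)
    (hf : MemLp f 2 (volume : Measure ℝ))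
    (hxf : MemLp (fun x : ℝ => (x : ℂ) * f x) 2 (volume : Measure ℝ))
    (a b : ℂ) :
    (∫ x : ℝ, ‖(f x - f (x - δ)) / (δ : ℂ) - a * f x‖ ^ 2) ^ ((1 : ℝ) / 2)
      * (∫ x : ℝ, ‖(x : ℂ) * f x - b * f x‖ ^ 2) ^ ((1 : ℝ) / 2)
    ≥ (1 / 2) * ‖∫ x : ℝ, f (x - δ) * (starRingEnd ℂ) (f x)‖ := by
  have hB_norm : ∫ x : ℝ, ‖(x : ℂ) * f x - conj b * f x‖ ^ 2
      = ∫ x : ℝ, ‖(x : ℂ) * f x - b * f x‖ ^ 2 := by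
    refine integral_congr_ae (.of_forall fun x => ?_)
    have hconj : (x : ℂ) - conj b = conj ((x : ℂ) - b) := by simp
    simp only [← sub_mul, norm_mul, hconj, RCLike.norm_conj]
  have cs₁ := norm_integral_mul_conj_le (memLp_ofReal_mul_sub_mul hf hxf b)
    (memLp_forwardDiff_sub hf δ (conj a))
  have cs₂ := norm_integral_mul_conj_le (memLp_backwardDiff_sub hf δ a)
    (memLp_ofReal_mul_sub_mul hf hxf (conj b))
  rw [← integral_norm_sq_backwardDiff_sub_eq hf δ a] at cs₁
  rw [hB_norm] at cs₂
  rw [ge_iff_le, integral_comp_sub_mul_conj_eq hδ.ne' hf hxf a b]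
  refine (mul_le_mul_of_nonneg_left (norm_sub_le _ _) one_half_pos.le).trans ?_
  linarith

/-- Uncertainty inequality for the backward difference operator
`A_δ f (x) = (f x - f (x-δ))/δ` and the multiplication operator `B f (x) = x f x`
on `L²(ℝ)`:  `‖(A_δ - a) f‖₂ ‖(B - b) f‖₂ ≥ (1/2) |⟨f(·-δ), f⟩|`. -/
theorem uncertainty_backward_difference
    (δ : ℝ) (hδ : 0 < δ) (f : ℝ → ℂ)
    (hf : MemLp f 2 (volume : Measure ℝ))
    (hxf : MemLp (fun x : ℝ => (x : ℂ) * f x) 2 (volume : Measure ℝ))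
    (hne : ¬ f =ᵐ[volume] (0 : ℝ → ℂ))
    (a b : ℂ) :
    (∫ x : ℝ, ‖(f x - f (x - δ)) / (δ : ℂ) - a * f x‖ ^ 2) ^ ((1 : ℝ) / 2)
      * (∫ x : ℝ, ‖(x : ℂ) * f x - b * f x‖ ^ 2) ^ ((1 : ℝ) / 2)
    ≥ (1 / 2) * ‖∫ x : ℝ, f (x - δ) * (starRingEnd ℂ) (f x)‖ :=
  uncertainty_backward_difference_general δ hδ f hf hxf a b
end

section
/- For every nonzero f ∈ L²(ℝ) with x·f(x) ∈ L²(ℝ), and every δ > 0 and a, b ∈ ℂ: ‖(C_δ - a)f‖₂ · ‖(B - b)f‖₂ ≥ (1/2)|⟨(f(· + δ) + f(· - δ))/2, f⟩|, where C_δ f(x) = (f(x+δ)-f(x-δ))/(2δ). -/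
/-!
Robertson's argument. If `re ⟪p, f⟫ = 0` and `im ⟪q, f⟫ = 0` (as for `p = A f`, `q = B f` with
`A` skew-symmetric and `B` symmetric), replacing `a` by `i Im a` and `b` by `Re b` only decreases
`‖p - a f‖` and `‖q - b f‖` and does not change `re ⟪p, q⟫`, so Cauchy–Schwarz gives
`|re ⟪p, q⟫| ≤ ‖p - a f‖ ‖q - b f‖`. The central difference `C_δ` is skew-symmetric because
translation by `δ` has adjoint translation by `-δ`, and shifting the integration variable by `δ`
gives `-2 re ⟪C_δ f, B f⟫ = re ∫ conj (f x) f (x + δ) = ⟨(f(·+δ) + f(·-δ))/2, f⟩`: this is the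
commutator `[C_δ, B] f = (f(·+δ) + f(·-δ))/2` paired with `f`.
-/

open MeasureTheory Complex
open scoped ComplexConjugate InnerProductSpace ENNReal

section Robertson

variable {E : Type*} [NormedAddCommGroup E] [InnerProductSpace ℂ E]

lemma norm_le_norm_add_of_re_inner_eq_zero {x y : E} (h : re ⟪x, y⟫_ℂ = 0) :
    ‖x‖ ≤ ‖x + y‖ := by
  have hsq := norm_add_sq (𝕜 := ℂ) x y
  rw [RCLike.re_to_complex, h] at hsq
  exact le_of_sq_le_sq (by nlinarith [sq_nonneg ‖y‖]) (norm_nonneg _)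

theorem abs_re_inner_le_norm_sub_smul_mul_norm_sub_smul {f p q : E}
    (hp : re ⟪p, f⟫_ℂ = 0) (hq : im ⟪q, f⟫_ℂ = 0) (a b : ℂ) :
    |re ⟪p, q⟫_ℂ| ≤ ‖p - a • f‖ * ‖q - b • f‖ := by
  set p' := p - (a.im * I) • f
  set q' := q - (b.re : ℂ) • f
  have hq₁ : im ⟪f, q⟫_ℂ = 0 := by rw [← inner_conj_symm, conj_im, hq, neg_zero]
  have hpq : re ⟪p', q'⟫_ℂ = re ⟪p, q⟫_ℂ := by
    simp only [p', q', inner_sub_left, inner_sub_right, inner_smul_left, inner_smul_right]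
    simp [hp, hq₁, ← ofReal_pow]
  have hp' : p - a • f = p' + (-(a.re : ℂ)) • f := by
    simp only [p']
    conv_lhs => rw [← re_add_im a]
    rw [neg_smul, add_smul]
    abel
  have hq' : q - b • f = q' + (-(b.im * I)) • f := by
    simp only [q']
    conv_lhs => rw [← re_add_im b]
    rw [neg_smul, add_smul]
    abel
  have hp'f : re ⟪p', (-(a.re : ℂ)) • f⟫_ℂ = 0 := by
    simp only [p', inner_sub_left, inner_smul_left, inner_smul_right]
    simp [hp, ← ofReal_pow]
  have hq'f : re ⟪q', (-(b.im * I)) • f⟫_ℂ = 0 := by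
    simp only [q', inner_sub_left, inner_smul_left, inner_smul_right]
    simp [hq, ← ofReal_pow]
  calc |re ⟪p, q⟫_ℂ| = |re ⟪p', q'⟫_ℂ| := by rw [hpq]
    _ ≤ ‖⟪p', q'⟫_ℂ‖ := abs_re_le_norm _
    _ ≤ ‖p'‖ * ‖q'‖ := norm_inner_le_norm _ _
    _ ≤ ‖p - a • f‖ * ‖q - b • f‖ := by
      rw [hp', hq']
      exact mul_le_mul (norm_le_norm_add_of_re_inner_eq_zero hp'f)
        (norm_le_norm_add_of_re_inner_eq_zero hq'f) (norm_nonneg _) (norm_nonneg _)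

end Robertson

namespace MeasureTheory

section L2

variable {α 𝕜 : Type*} [MeasurableSpace α] {μ : Measure α} [RCLike 𝕜]

lemma MemLp.norm_toLp_eq_integral {E : Type*} [NormedAddCommGroup E] {u : α → E}
    (hu : MemLp u 2 μ) : ‖hu.toLp u‖ = (∫ x, ‖u x‖ ^ 2 ∂μ) ^ ((1 : ℝ) / 2) := by
  rw [Lp.norm_toLp, toReal_eLpNorm hu.1,
    lpNorm_eq_integral_norm_rpow_toReal two_ne_zero ENNReal.ofNat_ne_top hu.1]
  norm_num

lemma MemLp.norm_toLp_sub_smul_toLp {u v : α → 𝕜} (hu : MemLp u 2 μ) (hv : MemLp v 2 μ)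
    (c : 𝕜) : ‖hu.toLp u - c • hv.toLp v‖ = (∫ x, ‖u x - c * v x‖ ^ 2 ∂μ) ^ ((1 : ℝ) / 2) := by
  rw [← MemLp.toLp_const_smul, ← MemLp.toLp_sub, norm_toLp_eq_integral]
  rfl

lemma MemLp.inner_toLp_toLp {u v : α → 𝕜} (hu : MemLp u 2 μ) (hv : MemLp v 2 μ) :
    ⟪hu.toLp u, hv.toLp v⟫_𝕜 = ∫ x, conj (u x) * v x ∂μ := by
  rw [L2.inner_def]
  refine integral_congr_ae ?_
  filter_upwards [hu.coeFn_toLp, hv.coeFn_toLp] with x hux hvx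
  rw [hux, hvx, RCLike.inner_apply, mul_comm]

lemma MemLp.integrable_conj_mul {u v : α → 𝕜} (hu : MemLp u 2 μ) (hv : MemLp v 2 μ) :
    Integrable (fun x => conj (u x) * v x) μ :=
  hu.star.integrable_mul hv

lemma conj_integral_conj_mul (u v : α → 𝕜) :
    conj (∫ x, conj (u x) * v x ∂μ) = ∫ x, conj (v x) * u x ∂μ := by
  rw [← integral_conj]
  simp_rw [map_mul, RCLike.conj_conj, mul_comm]

lemma im_integral_conj_ofReal_mul_mul_self (w : α → ℝ) (u : α → ℂ) :
    (∫ x, conj (w x * u x) * u x ∂μ).im = 0 := by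
  have hreal : ∀ x, conj (w x * u x) * u x = ((w x * ‖u x‖ ^ 2 : ℝ) : ℂ) := fun x => by
    rw [map_mul, conj_ofReal, mul_assoc, ← normSq_eq_conj_mul_self, normSq_eq_norm_sq]
    push_cast
    ring
  simp_rw [hreal, integral_complex_ofReal, ofReal_im]

end L2

section Translation

variable {G : Type*} [MeasurableSpace G] [AddGroup G] [MeasurableAdd G] {ν : Measure G}
  [ν.IsAddRightInvariant]

lemma MemLp.comp_add_right {E : Type*} [NormedAddCommGroup E] {p : ℝ≥0∞} {g : G → E}
    (hg : MemLp g p ν) (c : G) : MemLp (fun x => g (x + c)) p ν :=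
  hg.comp_measurePreserving (measurePreserving_add_right ν c)

lemma MemLp.comp_sub_right {E : Type*} [NormedAddCommGroup E] {p : ℝ≥0∞} {g : G → E}
    (hg : MemLp g p ν) (c : G) : MemLp (fun x => g (x - c)) p ν :=
  hg.comp_measurePreserving (measurePreserving_sub_right ν c)

lemma integral_comp_sub_eq_integral_comp_add {E : Type*} [NormedAddCommGroup E]
    [NormedSpace ℝ E] (F : G → G → E) (c : G) :
    ∫ x, F (x - c) x ∂ν = ∫ x, F x (x + c) ∂ν := by
  rw [← integral_add_right_eq_self _ c]
  simp only [add_sub_cancel_right]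

lemma integral_conj_comp_sub_mul {𝕜 : Type*} [RCLike 𝕜] (g : G → 𝕜) (c : G) :
    ∫ x, conj (g (x - c)) * g x ∂ν = ∫ x, conj (g x) * g (x + c) ∂ν :=
  integral_comp_sub_eq_integral_comp_add (fun y x => conj (g y) * g x) c

end Translation

end MeasureTheory

noncomputable def centralDifference (δ : ℝ) (f : ℝ → ℂ) (x : ℝ) : ℂ :=
  (f (x + δ) - f (x - δ)) / (2 * δ)

section CentralDifference

variable {f : ℝ → ℂ} {δ : ℝ}

lemma MeasureTheory.MemLp.centralDifference (hf : MemLp f 2) (δ : ℝ) :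
    MemLp (centralDifference δ f) 2 := by
  unfold _root_.centralDifference
  simp_rw [div_eq_mul_inv]
  exact ((hf.comp_add_right δ).sub (hf.comp_sub_right δ)).mul_const _

lemma integral_conj_centralDifference_mul {h : ℝ → ℂ} (hf : MemLp f 2) (hh : MemLp h 2) :
    ∫ x, conj (centralDifference δ f x) * h x
      = ((∫ x, conj (f (x + δ)) * h x) - ∫ x, conj (f (x - δ)) * h x) / (2 * δ) := by
  rw [← integral_sub ((hf.comp_add_right δ).integrable_conj_mul hh)
    ((hf.comp_sub_right δ).integrable_conj_mul hh), ← integral_div]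
  congr 1 with x
  simp only [centralDifference, map_div₀, map_sub, map_mul, conj_ofReal, map_ofNat]
  ring

lemma re_integral_conj_centralDifference_mul_self (hf : MemLp f 2) :
    (∫ x, conj (centralDifference δ f x) * f x).re = 0 := by
  rw [integral_conj_centralDifference_mul hf hf, integral_conj_comp_sub_mul,
    ← conj_integral_conj_mul]
  simp [div_re]

lemma re_integral_conj_centralDifference_mul_ofReal_mul (hf : MemLp f 2)
    (hxf : MemLp (fun x : ℝ => (x : ℂ) * f x) 2) (hδ : δ ≠ 0) :
    (∫ x, conj (centralDifference δ f x) * (x * f x)).re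
      = -(∫ x, conj (f x) * f (x + δ)).re / 2 := by
  have hshift : ∫ x, conj (f (x - δ)) * (x * f x)
      = (∫ x, conj (x * f x) * f (x + δ)) + δ * ∫ x, conj (f x) * f (x + δ) := by
    rw [integral_comp_sub_eq_integral_comp_add (fun y x => conj (f y) * (x * f x)),
      ← integral_const_mul, ← integral_add (hxf.integrable_conj_mul (hf.comp_add_right δ))
      ((hf.integrable_conj_mul (hf.comp_add_right δ)).const_mul _)]
    congr 1 with x
    simp only [map_mul, conj_ofReal, ofReal_add]
    ring
  rw [integral_conj_centralDifference_mul hf hxf, hshift,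
    ← conj_integral_conj_mul (fun x => f (x + δ))]
  simp [div_re]
  field_simp

lemma integral_add_shifts_div_two_mul_conj (hf : MemLp f 2) :
    ∫ x, (f (x + δ) + f (x - δ)) / 2 * conj (f x) = ((∫ x, conj (f x) * f (x + δ)).re : ℂ) := by
  have hsplit : ∫ x, (f (x + δ) + f (x - δ)) / 2 * conj (f x)
      = ((∫ x, conj (f x) * f (x + δ)) + ∫ x, conj (f x) * f (x - δ)) / 2 := by
    rw [← integral_add (hf.integrable_conj_mul (hf.comp_add_right δ))
      (hf.integrable_conj_mul (hf.comp_sub_right δ)), ← integral_div]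
    congr 1 with x
    ring
  rw [hsplit, ← conj_integral_conj_mul (fun x => f (x - δ)), integral_conj_comp_sub_mul, add_conj]
  push_cast
  ring

end CentralDifference

theorem uncertainty_central_difference_general
    (δ : ℝ) (hδ : 0 < δ) (f : ℝ → ℂ)
    (hf : MemLp f 2 (volume : Measure ℝ))
    (hxf : MemLp (fun x : ℝ => (x : ℂ) * f x) 2 (volume : Measure ℝ))
    (a b : ℂ) :
    (∫ x : ℝ, ‖(f (x + δ) - f (x - δ)) / (2 * (δ : ℂ)) - a * f x‖ ^ 2) ^ ((1 : ℝ) / 2)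
      * (∫ x : ℝ, ‖(x : ℂ) * f x - b * f x‖ ^ 2) ^ ((1 : ℝ) / 2)
    ≥ (1 / 2) * ‖∫ x : ℝ, (f (x + δ) + f (x - δ)) / 2 * (starRingEnd ℂ) (f x)‖ := by
  have hCf := hf.centralDifference δ
  have hskew : re ⟪hCf.toLp _, hf.toLp f⟫_ℂ = 0 := by
    rw [MemLp.inner_toLp_toLp]
    exact re_integral_conj_centralDifference_mul_self hf
  have hsymm : im ⟪hxf.toLp _, hf.toLp f⟫_ℂ = 0 := by
    rw [MemLp.inner_toLp_toLp]
    exact im_integral_conj_ofReal_mul_mul_self _ f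
  have key := abs_re_inner_le_norm_sub_smul_mul_norm_sub_smul hskew hsymm a b
  rw [MemLp.inner_toLp_toLp, re_integral_conj_centralDifference_mul_ofReal_mul hf hxf hδ.ne',
    MemLp.norm_toLp_sub_smul_toLp, MemLp.norm_toLp_sub_smul_toLp] at key
  rw [integral_add_shifts_div_two_mul_conj hf, norm_real, Real.norm_eq_abs, ge_iff_le]
  refine le_of_eq_of_le ?_ key
  rw [abs_div, abs_neg, abs_two]
  ring

/-- Uncertainty inequality for the central difference operator
`C_δ f (x) = (f (x+δ) - f (x-δ))/(2δ)` and the multiplication operator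
`B f (x) = x f x` on `L²(ℝ)`:
`‖(C_δ - a) f‖₂ ‖(B - b) f‖₂ ≥ (1/2) |⟨(f(·+δ) + f(·-δ))/2, f⟩|`. -/
theorem uncertainty_central_difference
    (δ : ℝ) (hδ : 0 < δ) (f : ℝ → ℂ)
    (hf : MemLp f 2 (volume : Measure ℝ))
    (hxf : MemLp (fun x : ℝ => (x : ℂ) * f x) 2 (volume : Measure ℝ))
    (hne : ¬ f =ᵐ[volume] (0 : ℝ → ℂ))
    (a b : ℂ) :
    (∫ x : ℝ, ‖(f (x + δ) - f (x - δ)) / (2 * (δ : ℂ)) - a * f x‖ ^ 2) ^ ((1 : ℝ) / 2)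
      * (∫ x : ℝ, ‖(x : ℂ) * f x - b * f x‖ ^ 2) ^ ((1 : ℝ) / 2)
    ≥ (1 / 2) * ‖∫ x : ℝ, (f (x + δ) + f (x - δ)) / 2 * (starRingEnd ℂ) (f x)‖ :=
  uncertainty_central_difference_general δ hδ f hf hxf a b
end

section
/- For every square-summable complex sequence (f(n))_{n∈ℤ} with (n·f(n)) also square-summable, and all a, b ∈ ℂ: (Σ_n |f(n-1) - a f(n)|²)^{1/2} · (Σ_n |(n-b) f(n)|²)^{1/2} ≥ (1/2)|Σ_n f(n-1) · conj(f(n))|, provided f ≠ 0. -/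
/-!
On `ℓ²(ℤ)` the shift `S` is unitary and the multiplication operator `N` is symmetric with
`[N, S] = S`. For `A = S - a` and `B = N - b` this gives `⟪f, S f⟫ = ⟪B* f, A f⟫ - ⟪A* f, B f⟫`;
both operators are normal, so `‖A* f‖ = ‖A f‖` and `‖B* f‖ = ‖B f‖`, and Cauchy–Schwarz on the two
terms yields `|⟪f, S f⟫| ≤ 2 ‖A f‖ ‖B f‖`.
-/

open scoped ComplexConjugate InnerProductSpace

section InnerProductSpace

variable {𝕜 E : Type*} [RCLike 𝕜] [NormedAddCommGroup E] [InnerProductSpace 𝕜 E]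

theorem norm_sub_conj_smul_eq_norm_sub_smul {u v : E} (h : ‖u‖ = ‖v‖) (a : 𝕜) :
    ‖u - conj a • v‖ = ‖v - a • u‖ := by
  have hre : RCLike.re ⟪u, conj a • v⟫_𝕜 = RCLike.re ⟪v, a • u⟫_𝕜 := by
    rw [inner_smul_right, inner_smul_right, ← inner_conj_symm u v, ← RCLike.conj_re, map_mul,
      RCLike.conj_conj, RCLike.conj_conj]
  refine (sq_eq_sq₀ (norm_nonneg _) (norm_nonneg _)).1 ?_
  rw [@norm_sub_sq 𝕜, @norm_sub_sq 𝕜, norm_smul, norm_smul, RCLike.norm_conj, hre, h]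

/-- `y` and `y'` play the roles of `(N - b) x` and `(N - b)* x` for a symmetric `N` with
`[N, U] = U`; only these weak forms are needed, as `N` may be unbounded. -/
theorem norm_inner_map_self_le_of_commutator (U : E ≃ₗᵢ[𝕜] E) (a : 𝕜) {x y y' : E}
    (hcomm : ⟪y', U x⟫_𝕜 = ⟪x, U y + U x⟫_𝕜) (hsymm : ⟪y', x⟫_𝕜 = ⟪x, y⟫_𝕜)
    (hnorm : ‖y'‖ = ‖y‖) :
    ‖⟪x, U x⟫_𝕜‖ ≤ 2 * ‖U x - a • x‖ * ‖y‖ := by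
  have hsplit : ⟪x, U x⟫_𝕜 = ⟪y', U x - a • x⟫_𝕜 - ⟪U.symm x - conj a • x, y⟫_𝕜 := by
    rw [inner_sub_right, inner_smul_right, inner_sub_left, inner_smul_left, RCLike.conj_conj,
      hcomm, hsymm, ← U.inner_map_map (U.symm x) y, U.apply_symm_apply, inner_add_right]
    ring
  have hnorm' : ‖U.symm x - conj a • x‖ = ‖U x - a • x‖ := by
    rw [← U.norm_map, map_sub, map_smul, U.apply_symm_apply,
      norm_sub_conj_smul_eq_norm_sub_smul (U.norm_map x).symm]
  calc ‖⟪x, U x⟫_𝕜‖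
      ≤ ‖⟪y', U x - a • x⟫_𝕜‖ + ‖⟪U.symm x - conj a • x, y⟫_𝕜‖ := hsplit ▸ norm_sub_le _ _
    _ ≤ ‖y'‖ * ‖U x - a • x‖ + ‖U.symm x - conj a • x‖ * ‖y‖ :=
        add_le_add (norm_inner_le_norm _ _) (norm_inner_le_norm _ _)
    _ = 2 * ‖U x - a • x‖ * ‖y‖ := by rw [hnorm, hnorm']; ring

end InnerProductSpace

section lp

variable {ι κ 𝕜 : Type*}

theorem memℓp_two_iff_summable_sq {E : ι → Type*} [∀ i, NormedAddCommGroup (E i)]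
    {x : ∀ i, E i} : Memℓp x 2 ↔ Summable fun i => ‖x i‖ ^ 2 := by
  simpa using memℓp_gen_iff (E := E) (p := 2) (by norm_num)

namespace lp

theorem norm_two_eq_rpow_tsum_sq {E : ι → Type*} [∀ i, NormedAddCommGroup (E i)]
    (x : lp E 2) : ‖x‖ = (∑' i, ‖x i‖ ^ 2) ^ ((1 : ℝ) / 2) := by
  simpa using norm_eq_tsum_rpow (p := 2) (by norm_num) x

section NormedSpace

variable {E : Type*} [NormedField 𝕜] [NormedAddCommGroup E] [NormedSpace 𝕜 E]

def compEquiv (e : ι ≃ κ) : lp (fun _ : κ => E) 2 ≃ₗᵢ[𝕜] lp (fun _ : ι => E) 2 where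
  toFun x := ⟨x ∘ e, memℓp_two_iff_summable_sq.2 <|
    e.summable_iff.2 (memℓp_two_iff_summable_sq.1 x.2)⟩
  invFun x := ⟨x ∘ e.symm, memℓp_two_iff_summable_sq.2 <|
    e.symm.summable_iff.2 (memℓp_two_iff_summable_sq.1 x.2)⟩
  map_add' _ _ := rfl
  map_smul' _ _ := rfl
  left_inv x := by ext; simp
  right_inv x := by ext; simp
  norm_map' x := by
    simp only [LinearEquiv.coe_mk, norm_two_eq_rpow_tsum_sq]
    exact congrArg (· ^ _) (e.tsum_eq fun k => ‖x k‖ ^ 2)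

@[simp]
theorem compEquiv_apply (e : ι ≃ κ) (x : lp (fun _ : κ => E) 2) (i : ι) :
    compEquiv (𝕜 := 𝕜) e x i = x (e i) :=
  rfl

end NormedSpace

section RCLike

variable [RCLike 𝕜]

theorem inner_eq_inner_of_conj_weight {w : ι → 𝕜} {x y y' : lp (fun _ : ι => 𝕜) 2}
    (hy : ∀ i, y i = w i * x i) (hy' : ∀ i, y' i = conj (w i) * x i) :
    ⟪y', x⟫_𝕜 = ⟪x, y⟫_𝕜 := by
  simp only [inner_eq_tsum, RCLike.inner_apply, hy, hy', map_mul, RCLike.conj_conj]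
  exact tsum_congr fun i => by ring

theorem norm_eq_norm_of_conj_weight {w : ι → 𝕜} {x y y' : lp (fun _ : ι => 𝕜) 2}
    (hy : ∀ i, y i = w i * x i) (hy' : ∀ i, y' i = conj (w i) * x i) : ‖y'‖ = ‖y‖ := by
  simp only [norm_two_eq_rpow_tsum_sq, hy, hy', norm_mul, RCLike.norm_conj]

def shift : lp (fun _ : ℤ => 𝕜) 2 ≃ₗᵢ[𝕜] lp (fun _ : ℤ => 𝕜) 2 :=
  compEquiv (Equiv.subRight 1)

@[simp]
theorem shift_apply (x : lp (fun _ : ℤ => 𝕜) 2) (n : ℤ) : shift x n = x (n - 1) :=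
  rfl

theorem inner_shift_eq_inner_shift_add {b : 𝕜} {x y y' : lp (fun _ : ℤ => 𝕜) 2}
    (hy : ∀ n : ℤ, y n = (n - b) * x n) (hy' : ∀ n : ℤ, y' n = (n - conj b) * x n) :
    ⟪y', shift x⟫_𝕜 = ⟪x, shift y + shift x⟫_𝕜 := by
  simp only [inner_eq_tsum, RCLike.inner_apply, coeFn_add, Pi.add_apply, shift_apply, hy, hy',
    map_mul, map_sub, map_intCast, RCLike.conj_conj]
  exact tsum_congr fun n => by push_cast; ring

end RCLike

end lp

theorem breitenberger_fourier_coefficients_general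
    (f : ℤ → ℂ)
    (hf : Summable fun n : ℤ => ‖f n‖ ^ 2)
    (hnf : Summable fun n : ℤ => ‖(n : ℂ) * f n‖ ^ 2)
    (a b : ℂ) :
    (∑' n : ℤ, ‖f (n - 1) - a * f n‖ ^ 2) ^ ((1 : ℝ) / 2)
      * (∑' n : ℤ, ‖((n : ℂ) - b) * f n‖ ^ 2) ^ ((1 : ℝ) / 2)
    ≥ (1 / 2) * ‖∑' n : ℤ, f (n - 1) * (starRingEnd ℂ) (f n)‖ := by
  have hx : Memℓp f 2 := memℓp_two_iff_summable_sq.2 hf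
  have hmul (c : ℂ) : Memℓp (fun n : ℤ => ((n : ℂ) - c) * f n) 2 := by
    convert (memℓp_two_iff_summable_sq.2 hnf).sub (hx.const_smul c) using 1
    ext n
    simp [sub_mul]
  let x : lp (fun _ : ℤ => ℂ) 2 := ⟨f, hx⟩
  let y : lp (fun _ : ℤ => ℂ) 2 := ⟨_, hmul b⟩
  let y' : lp (fun _ : ℤ => ℂ) 2 := ⟨_, hmul (conj b)⟩
  have key := norm_inner_map_self_le_of_commutator lp.shift a
    (lp.inner_shift_eq_inner_shift_add (x := x) (y := y) (y' := y') (fun _ => rfl) fun _ => rfl)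
    (lp.inner_eq_inner_of_conj_weight (w := fun n : ℤ => (n : ℂ) - b) (x := x) (fun _ => rfl)
      fun _ => by simp [y', x])
    (lp.norm_eq_norm_of_conj_weight (w := fun n : ℤ => (n : ℂ) - b) (x := x) (fun _ => rfl)
      fun _ => by simp [y', x])
  simp only [lp.norm_two_eq_rpow_tsum_sq, lp.inner_eq_tsum, RCLike.inner_apply, lp.coeFn_sub,
    lp.coeFn_smul, Pi.sub_apply, Pi.smul_apply, lp.shift_apply, smul_eq_mul] at key
  linarith

/-- The Breitenberger uncertainty principle on the circle, expressed in terms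
of Fourier coefficients: for a square-summable sequence `f : ℤ → ℂ` with
`(n f n)` square-summable and `f ≠ 0`,
`(Σ |f(n-1) - a f n|²)^{1/2} (Σ |(n-b) f n|²)^{1/2} ≥ (1/2)|Σ f(n-1) conj (f n)|`. -/
theorem breitenberger_fourier_coefficients
    (f : ℤ → ℂ)
    (hf : Summable fun n : ℤ => ‖f n‖ ^ 2)
    (hnf : Summable fun n : ℤ => ‖(n : ℂ) * f n‖ ^ 2)
    (hne : f ≠ 0) (a b : ℂ) :
    (∑' n : ℤ, ‖f (n - 1) - a * f n‖ ^ 2) ^ ((1 : ℝ) / 2)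
      * (∑' n : ℤ, ‖((n : ℂ) - b) * f n‖ ^ 2) ^ ((1 : ℝ) / 2)
    ≥ (1 / 2) * ‖∑' n : ℤ, f (n - 1) * (starRingEnd ℂ) (f n)‖ :=
  breitenberger_fourier_coefficients_general f hf hnf a b
end lp
end

section
/- For every f ∈ L²(-π, π) with f absolutely continuous and f' ∈ L²(-π,π), f(-π) = f(π), f ≠ 0, and all a, b ∈ ℂ: ‖(e^{iθ} - a)f‖₂ · ‖(d/dθ - b)f‖₂ ≥ (1/2)|⟨e^{iθ} f, f⟩|. -/
/-!
Write `U` for multiplication by `e^{iθ}` and `D = d/dθ`. Integrating by parts on the circle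
(periodicity kills the boundary terms) shows that `D` is skew-symmetric, and the product rule gives
the commutator relation `[D, U] = iU`. Hence
`i⟨Uf, f⟩ = ⟨[D, U] f, f⟩ = -⟨(U - a) f, (D - b₀) f⟩ - ⟨(D - b₀) f, (U - a)^* f⟩`
for every `a` and every purely imaginary `b₀`, and Cauchy–Schwarz together with
`‖(U - a)^* f‖ = ‖(U - a) f‖` bounds the right-hand side by `2 ‖(U - a) f‖ ‖(D - b₀) f‖`.
Finally, `b₀ = i Im b` is optimal: since `Re ⟨(D - b₀) f, f⟩ = 0`, Pythagoras gives
`‖(D - b) f‖² = ‖(D - b₀) f‖² + (Re b)² ‖f‖²`.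

Integration by parts for absolutely continuous functions rests on the fact that an absolutely
continuous function whose derivative vanishes almost everywhere is constant.
-/

open MeasureTheory Real Set Filter ComplexConjugate

namespace AbsolutelyContinuousOnInterval

variable {X Y : Type*} [PseudoMetricSpace X] [PseudoMetricSpace Y] {f g : ℝ → X} {a b : ℝ}

theorem comp_isometry {φ : X → Y} (hφ : Isometry φ) (hf : AbsolutelyContinuousOnInterval f a b) :
    AbsolutelyContinuousOnInterval (φ ∘ f) a b := by
  simpa only [AbsolutelyContinuousOnInterval, Function.comp_apply, hφ.dist_eq] using hf

theorem congr (hf : AbsolutelyContinuousOnInterval f a b) (hfg : EqOn f g (uIcc a b)) :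
    AbsolutelyContinuousOnInterval g a b := by
  refine hf.congr' (eventually_inf_principal.2 (Eventually.of_forall fun E hE => ?_))
  refine Finset.sum_congr rfl fun i hi => ?_
  rw [hfg (hE.1 i hi).1, hfg (hE.1 i hi).2]

theorem memLp_restrict_Ioc {E : Type*} [NormedAddCommGroup E] {g : ℝ → E} (hab : a ≤ b)
    (hg : AbsolutelyContinuousOnInterval g a b) (p : ENNReal) :
    MemLp g p (volume.restrict (Ioc a b)) := by
  have hsub : Ioc a b ⊆ uIcc a b := uIcc_of_le hab ▸ Ioc_subset_Icc_self
  obtain ⟨C, hC⟩ := hg.exists_bound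
  exact MemLp.of_bound ((hg.continuousOn.mono hsub).aestronglyMeasurable measurableSet_Ioc) C
    (ae_restrict_of_forall_mem measurableSet_Ioc fun x hx => hC x (hsub hx))

end AbsolutelyContinuousOnInterval

section Primitive

variable {E : Type*} [NormedAddCommGroup E] [NormedSpace ℝ E] {g g' : ℝ → E} {a b : ℝ}

-- Compare with the primitive of `‖g‖`, absolutely continuous by the real-valued case.
theorem IntervalIntegrable.absolutelyContinuousOnInterval_primitive
    {c : ℝ} (hg : IntervalIntegrable g volume a b) (hc : c ∈ uIcc a b) :
    AbsolutelyContinuousOnInterval (fun x ↦ ∫ t in c..x, g t) a b := by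
  have hnorm := hg.norm.absolutelyContinuousOnInterval_intervalIntegral hc
  have hint : ∀ x ∈ uIcc a b, IntervalIntegrable g volume c x := fun x hx =>
    hg.mono_set (uIcc_subset_uIcc hc hx)
  refine squeeze_zero' (Eventually.of_forall fun _ => Finset.sum_nonneg fun _ _ => dist_nonneg)
    ?_ hnorm
  rw [eventually_inf_principal]
  filter_upwards with E hE
  refine Finset.sum_le_sum fun i hi => ?_
  obtain ⟨hs, ht⟩ := hE.1 i hi
  rw [dist_eq_norm, dist_eq_norm,
    intervalIntegral.integral_interval_sub_left (hint _ hs) (hint _ ht),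
    intervalIntegral.integral_interval_sub_left (hint _ hs).norm (hint _ ht).norm, Real.norm_eq_abs]
  exact intervalIntegral.norm_integral_le_abs_integral_norm

theorem absolutelyContinuousOnInterval_of_eq_add_integral (hab : a ≤ b)
    (hg' : IntervalIntegrable g' volume a b) (hg : ∀ x ∈ Icc a b, g x = g a + ∫ t in a..x, g' t) :
    AbsolutelyContinuousOnInterval g a b :=
  ((hg'.absolutelyContinuousOnInterval_primitive left_mem_uIcc).comp_isometry
    (IsometryEquiv.addLeft (g a)).isometry).congr fun x hx => (hg x (uIcc_of_le hab ▸ hx)).symm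

theorem ae_hasDerivAt_of_eq_add_integral [CompleteSpace E] (hab : a ≤ b)
    (hg' : IntervalIntegrable g' volume a b) (hg : ∀ x ∈ Icc a b, g x = g a + ∫ t in a..x, g' t) :
    ∀ᵐ x, x ∈ uIcc a b → HasDerivAt g (g' x) x := by
  have hne : ∀ c : ℝ, ∀ᵐ x, x ≠ c := fun c => by simp [ae_iff, measure_singleton]
  filter_upwards [hg'.ae_hasDerivAt_integral, hne a, hne b] with x hderiv hxa hxb hx
  have hx' : x ∈ Ioo a b := by
    rw [uIcc_of_le hab] at hx
    exact ⟨lt_of_le_of_ne hx.1 hxa.symm, lt_of_le_of_ne hx.2 hxb⟩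
  refine ((hderiv hx a left_mem_uIcc).const_add (g a)).congr_of_eventuallyEq ?_
  filter_upwards [Ioo_mem_nhds hx'.1 hx'.2] with y hy using hg y (Ioo_subset_Icc_self hy)

end Primitive

theorem AbsolutelyContinuousOnInterval.integral_deriv_mul_eq_sub_of_ae_hasDerivAt
    {𝕜 : Type*} [RCLike 𝕜] {g h g' h' : ℝ → 𝕜} {a b : ℝ}
    (hg : AbsolutelyContinuousOnInterval g a b) (hh : AbsolutelyContinuousOnInterval h a b)
    (hg' : ∀ᵐ x, x ∈ uIcc a b → HasDerivAt g (g' x) x)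
    (hh' : ∀ᵐ x, x ∈ uIcc a b → HasDerivAt h (h' x) x)
    (hint : IntervalIntegrable (fun x => g' x * h x + g x * h' x) volume a b) :
    ∫ x in a..b, g' x * h x + g x * h' x = g b * h b - g a * h a := by
  have hP := hint.absolutelyContinuousOnInterval_primitive left_mem_uIcc
  obtain ⟨C, hC⟩ := ((hg.fun_smul hh).sub hP).const_of_ae_hasDerivAt_zero (by
    filter_upwards [hg', hh', hint.ae_hasDerivAt_integral] with x hgx hhx hPx hx
    have := ((hgx hx).mul (hhx hx)).sub (hPx hx a left_mem_uIcc)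
    rwa [sub_self] at this)
  have hCa := hC a left_mem_uIcc
  have hCb := hC b right_mem_uIcc
  simp only [Pi.sub_apply, smul_eq_mul, intervalIntegral.integral_same] at hCa hCb
  linear_combination hCa - hCb

theorem Complex.norm_sub_mul_sq (d f b : ℂ) :
    ‖d - b * f‖ ^ 2
      = ‖d - b.im * I * f‖ ^ 2 + b.re ^ 2 * ‖f‖ ^ 2 - b.re * (d * conj f + f * conj d).re := by
  simp only [Complex.sq_norm, normSq_apply, mul_re, mul_im, sub_re, sub_im, add_re, conj_re,
    conj_im, ofReal_re, ofReal_im, I_re, I_im]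
  ring

theorem Complex.skew_sub_ofReal_mul_I_mul (d f : ℂ) (r : ℝ) :
    (d - r * I * f) * conj f + f * conj (d - r * I * f) = d * conj f + f * conj d := by
  simp only [map_sub, map_mul, conj_ofReal, conj_I]; ring

theorem Complex.commutator_sub_ofReal_mul_I_mul (e d f : ℂ) (r : ℝ) :
    (I * (e * f) + e * (d - r * I * f)) * conj f + e * f * conj (d - r * I * f)
      = (I * (e * f) + e * d) * conj f + e * f * conj d := by
  simp only [map_sub, map_mul, conj_ofReal, conj_I]; ring

section L2

variable {α : Type*} [MeasurableSpace α] {μ : Measure α}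

theorem MeasureTheory.MemLp.integrable_mul_conj {u v : α → ℂ} (hu : MemLp u 2 μ)
    (hv : MemLp v 2 μ) : Integrable (fun x => u x * conj (v x)) μ :=
  hu.integrable_mul hv.star

theorem MeasureTheory.MemLp.mul_of_norm_eq_one {e f : α → ℂ} (hf : MemLp f 2 μ)
    (he_meas : AEStronglyMeasurable e μ) (he : ∀ x, ‖e x‖ = 1) :
    MemLp (fun x => e x * f x) 2 μ :=
  hf.congr_norm (he_meas.mul hf.1) (ae_of_all _ fun x => by simp [he])

theorem norm_integral_mul_le_of_memLp {u v : α → ℂ} (hu : MemLp u 2 μ) (hv : MemLp v 2 μ) :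
    ‖∫ x, u x * v x ∂μ‖
      ≤ (∫ x, ‖u x‖ ^ 2 ∂μ) ^ (1 / 2 : ℝ) * (∫ x, ‖v x‖ ^ 2 ∂μ) ^ (1 / 2 : ℝ) := by
  have holder := integral_mul_norm_le_Lp_mul_Lq Real.HolderConjugate.two_two
    (by rwa [ENNReal.ofReal_ofNat] : MemLp u (.ofReal 2) μ)
    (by rwa [ENNReal.ofReal_ofNat] : MemLp v (.ofReal 2) μ)
  simp only [Real.rpow_two] at holder
  calc ‖∫ x, u x * v x ∂μ‖ ≤ ∫ x, ‖u x‖ * ‖v x‖ ∂μ := by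
        simpa only [norm_mul] using norm_integral_le_integral_norm (fun x => u x * v x)
    _ ≤ _ := holder

theorem MeasureTheory.MemLp.sub_mul_conj {e f : α → ℂ} (hf : MemLp f 2 μ)
    (he_meas : AEStronglyMeasurable e μ) (he : ∀ x, ‖e x‖ = 1) (a : ℂ) :
    MemLp (fun x => (e x - a) * conj (f x)) 2 μ :=
  ((hf.mul_of_norm_eq_one he_meas he).sub (hf.const_mul a)).congr_norm
    ((he_meas.sub aestronglyMeasurable_const).mul hf.1.star)
    (ae_of_all _ fun x => by simp [← sub_mul])

-- With `d = Df`, `hskew` says that `D` is skew on `f` and `hcomm` that `[D, U] = iU` on `f`,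
-- for the unitary `U = e·`.
theorem I_mul_integral_eq_of_commutator {e f d : α → ℂ} (hf : MemLp f 2 μ)
    (hd : MemLp d 2 μ) (he_meas : AEStronglyMeasurable e μ) (he : ∀ x, ‖e x‖ = 1)
    (hskew : ∫ x, d x * conj (f x) + f x * conj (d x) ∂μ = 0)
    (hcomm : ∫ x, (Complex.I * (e x * f x) + e x * d x) * conj (f x) + e x * f x * conj (d x) ∂μ
      = 0)
    (a : ℂ) :
    Complex.I * ∫ x, e x * f x * conj (f x) ∂μ
      = -((∫ x, (e x * f x - a * f x) * conj (d x) ∂μ)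
        + ∫ x, d x * ((e x - a) * conj (f x)) ∂μ) := by
  have hef := hf.mul_of_norm_eq_one he_meas he
  have iY : Integrable (fun x => d x * conj (f x) + f x * conj (d x)) μ :=
    (hd.integrable_mul_conj hf).add (hf.integrable_mul_conj hd)
  have iX : Integrable
      (fun x => (Complex.I * (e x * f x) + e x * d x) * conj (f x) + e x * f x * conj (d x)) μ :=
    (((hef.const_mul Complex.I).add (hd.mul_of_norm_eq_one he_meas he)).integrable_mul_conj
      hf).add (hef.integrable_mul_conj hd)
  have iT : Integrable (fun x => e x * f x * conj (f x)) μ := hef.integrable_mul_conj hf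
  have iU : Integrable (fun x => (e x * f x - a * f x) * conj (d x)) μ :=
    (hef.sub (hf.const_mul a)).integrable_mul_conj hd
  have iW : Integrable (fun x => d x * ((e x - a) * conj (f x))) μ :=
    hd.integrable_mul (hf.sub_mul_conj he_meas he a)
  have iUW : Integrable
      (fun x => (e x * f x - a * f x) * conj (d x) + d x * ((e x - a) * conj (f x))) μ :=
    iU.add iW
  refine eq_neg_of_add_eq_zero_left ?_
  calc
    _ = ∫ x, Complex.I * (e x * f x * conj (f x))
          + ((e x * f x - a * f x) * conj (d x) + d x * ((e x - a) * conj (f x))) ∂μ := by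
      rw [integral_add (iT.const_mul _) iUW, integral_add iU iW, integral_const_mul]
    _ = ∫ x, ((Complex.I * (e x * f x) + e x * d x) * conj (f x) + e x * f x * conj (d x))
          - a * (d x * conj (f x) + f x * conj (d x)) ∂μ :=
      integral_congr_ae (ae_of_all _ fun x => by ring)
    _ = 0 := by rw [integral_sub iX (iY.const_mul a), integral_const_mul, hcomm, hskew]; ring

theorem norm_integral_mul_conj_le_of_commutator {e f d : α → ℂ} (hf : MemLp f 2 μ)
    (hd : MemLp d 2 μ) (he_meas : AEStronglyMeasurable e μ) (he : ∀ x, ‖e x‖ = 1)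
    (hskew : ∫ x, d x * conj (f x) + f x * conj (d x) ∂μ = 0)
    (hcomm : ∫ x, (Complex.I * (e x * f x) + e x * d x) * conj (f x) + e x * f x * conj (d x) ∂μ
      = 0)
    (a : ℂ) :
    ‖∫ x, e x * f x * conj (f x) ∂μ‖
      ≤ 2 * ((∫ x, ‖e x * f x - a * f x‖ ^ 2 ∂μ) ^ (1 / 2 : ℝ)
        * (∫ x, ‖d x‖ ^ 2 ∂μ) ^ (1 / 2 : ℝ)) := by
  have hu : MemLp (fun x => e x * f x - a * f x) 2 μ :=
    (hf.mul_of_norm_eq_one he_meas he).sub (hf.const_mul a)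
  have hw_norm : ∫ x, ‖(e x - a) * conj (f x)‖ ^ 2 ∂μ = ∫ x, ‖e x * f x - a * f x‖ ^ 2 ∂μ := by
    simp [← sub_mul]
  have hd_norm : ∫ x, ‖conj (d x)‖ ^ 2 ∂μ = ∫ x, ‖d x‖ ^ 2 ∂μ := by simp
  calc ‖∫ x, e x * f x * conj (f x) ∂μ‖
      = ‖Complex.I * ∫ x, e x * f x * conj (f x) ∂μ‖ := by
        rw [norm_mul, Complex.norm_I, one_mul]
    _ ≤ ‖∫ x, (e x * f x - a * f x) * conj (d x) ∂μ‖
          + ‖∫ x, d x * ((e x - a) * conj (f x)) ∂μ‖ := by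
        rw [I_mul_integral_eq_of_commutator hf hd he_meas he hskew hcomm a, norm_neg]
        exact norm_add_le _ _
    _ ≤ _ := add_le_add (norm_integral_mul_le_of_memLp hu hd.star)
      (norm_integral_mul_le_of_memLp hd (hf.sub_mul_conj he_meas he a))
    _ = _ := by rw [hw_norm, hd_norm]; ring

theorem integral_norm_sub_sq_le_of_skew {f d : α → ℂ} (hf : MemLp f 2 μ) (hd : MemLp d 2 μ)
    (hskew : ∫ x, d x * conj (f x) + f x * conj (d x) ∂μ = 0) (b : ℂ) :
    ∫ x, ‖d x - b.im * Complex.I * f x‖ ^ 2 ∂μ ≤ ∫ x, ‖d x - b * f x‖ ^ 2 ∂μ := by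
  have iY : Integrable (fun x => d x * conj (f x) + f x * conj (d x)) μ :=
    (hd.integrable_mul_conj hf).add (hf.integrable_mul_conj hd)
  have hre : ∫ x, (d x * conj (f x) + f x * conj (d x)).re ∂μ = 0 := by
    simpa only [RCLike.re_to_complex, hskew, Complex.zero_re] using integral_re iY
  have iv : Integrable (fun x => ‖d x - b.im * Complex.I * f x‖ ^ 2) μ :=
    (hd.sub (hf.const_mul _)).norm.integrable_sq
  have if' : Integrable (fun x => b.re ^ 2 * ‖f x‖ ^ 2) μ := hf.norm.integrable_sq.const_mul _
  have ire : Integrable (fun x => b.re * (d x * conj (f x) + f x * conj (d x)).re) μ :=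
    iY.re.const_mul _
  have ivf : Integrable (fun x => ‖d x - b.im * Complex.I * f x‖ ^ 2 + b.re ^ 2 * ‖f x‖ ^ 2) μ :=
    iv.add if'
  rw [integral_congr_ae (ae_of_all _ fun x => Complex.norm_sub_mul_sq (d x) (f x) b),
    integral_sub ivf ire, integral_add iv if', integral_const_mul, integral_const_mul, hre]
  have : 0 ≤ b.re ^ 2 * ∫ x, ‖f x‖ ^ 2 ∂μ := by positivity
  linarith

end L2

theorem integral_deriv_mul_conj_add_eq_zero {f f' : ℝ → ℂ} {a b : ℝ} (hab : a ≤ b)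
    (hfac : AbsolutelyContinuousOnInterval f a b)
    (hfd : ∀ᵐ x, x ∈ uIcc a b → HasDerivAt f (f' x) x)
    (hf : MemLp f 2 (volume.restrict (Ioc a b))) (hf' : MemLp f' 2 (volume.restrict (Ioc a b)))
    (hper : f a = f b) :
    ∫ x in Ioc a b, f' x * conj (f x) + f x * conj (f' x) = 0 := by
  have := hfac.integral_deriv_mul_eq_sub_of_ae_hasDerivAt (g' := f')
    (h := fun x => conj (f x)) (h' := fun x => conj (f' x))
    (hfac.comp_isometry Complex.isometry_conj) hfd (hfd.mono fun x hx hmem => (hx hmem).star)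
    ((intervalIntegrable_iff_integrableOn_Ioc_of_le hab).2
      ((hf'.integrable_mul_conj hf).add (hf.integrable_mul_conj hf')))
  rwa [intervalIntegral.integral_of_le hab, hper, sub_self] at this

theorem Complex.hasDerivAt_exp_I_mul_ofReal (x : ℝ) :
    HasDerivAt (fun θ : ℝ => Complex.exp (Complex.I * θ))
      (Complex.I * Complex.exp (Complex.I * x)) x := by
  simpa [mul_comm] using ((Complex.ofRealCLM.hasDerivAt (x := x)).const_mul Complex.I).cexp

theorem integral_commutator_eq_zero {f f' : ℝ → ℂ}
    (hfac : AbsolutelyContinuousOnInterval f (-π) π)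
    (hfd : ∀ᵐ x, x ∈ uIcc (-π) π → HasDerivAt f (f' x) x)
    (hf : MemLp f 2 (volume.restrict (Ioc (-π) π)))
    (hf' : MemLp f' 2 (volume.restrict (Ioc (-π) π))) (hper : f (-π) = f π) :
    ∫ x in Ioc (-π) π, (Complex.I * (Complex.exp (Complex.I * x) * f x)
        + Complex.exp (Complex.I * x) * f' x) * conj (f x)
      + Complex.exp (Complex.I * x) * f x * conj (f' x) = 0 := by
  have hpi : -π ≤ π := by linarith [pi_pos]
  have he_ac : AbsolutelyContinuousOnInterval (fun θ : ℝ => Complex.exp (Complex.I * θ)) (-π) π :=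
    (Complex.contDiff_exp.comp (contDiff_const.mul Complex.ofRealCLM.contDiff)).contDiffOn
      |>.absolutelyContinuousOnInterval
  have he_meas : AEStronglyMeasurable (fun θ : ℝ => Complex.exp (Complex.I * θ))
      (volume.restrict (Ioc (-π) π)) := by
    fun_prop
  have hef := hf.mul_of_norm_eq_one he_meas Complex.norm_exp_I_mul_ofReal
  have hef' := hf'.mul_of_norm_eq_one he_meas Complex.norm_exp_I_mul_ofReal
  have he_pi : Complex.exp (Complex.I * ↑(-π)) = Complex.exp (Complex.I * π) := by
    norm_num [mul_comm Complex.I]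
  have := (he_ac.fun_smul hfac).integral_deriv_mul_eq_sub_of_ae_hasDerivAt
    (g' := fun x => Complex.I * (Complex.exp (Complex.I * x) * f x)
      + Complex.exp (Complex.I * x) * f' x)
    (h := fun x => conj (f x)) (h' := fun x => conj (f' x))
    (hfac.comp_isometry Complex.isometry_conj)
    (hfd.mono fun x hx hmem =>
      ((Complex.hasDerivAt_exp_I_mul_ofReal x).mul (hx hmem)).congr_deriv (by ring))
    (hfd.mono fun x hx hmem => (hx hmem).star)
    ((intervalIntegrable_iff_integrableOn_Ioc_of_le hpi).2
      ((((hef.const_mul Complex.I).add hef').integrable_mul_conj hf).add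
        (hef.integrable_mul_conj hf')))
  rwa [intervalIntegral.integral_of_le hpi, smul_eq_mul, smul_eq_mul, hper, he_pi,
    sub_self] at this

theorem breitenberger_uncertainty_general
    (f f' : ℝ → ℂ)
    (hAC : ∀ θ ∈ Set.Icc (-π) π, f θ = f (-π) + ∫ t in (-π)..θ, f' t)
    (hf' : MemLp f' 2 (volume.restrict (Set.Ioc (-π) π)))
    (hper : f (-π) = f π)
    (a b : ℂ) :
    (∫ θ in (-π)..π, ‖Complex.exp (Complex.I * θ) * f θ - a * f θ‖ ^ 2) ^ ((1 : ℝ) / 2)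
      * (∫ θ in (-π)..π, ‖f' θ - b * f θ‖ ^ 2) ^ ((1 : ℝ) / 2)
    ≥ (1 / 2) * ‖∫ θ in (-π)..π,
        Complex.exp (Complex.I * θ) * f θ * (starRingEnd ℂ) (f θ)‖ := by
  have hpi : -π ≤ π := by linarith [pi_pos]
  have hf'i : IntervalIntegrable f' volume (-π) π :=
    (intervalIntegrable_iff_integrableOn_Ioc_of_le hpi).2 (hf'.integrable one_le_two)
  have hfac := absolutelyContinuousOnInterval_of_eq_add_integral hpi hf'i hAC
  have hfd := ae_hasDerivAt_of_eq_add_integral hpi hf'i hAC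
  have hf := hfac.memLp_restrict_Ioc hpi 2
  have hskew := integral_deriv_mul_conj_add_eq_zero hpi hfac hfd hf hf' hper
  have hcomm := integral_commutator_eq_zero hfac hfd hf hf' hper
  have hv : MemLp (fun θ => f' θ - b.im * Complex.I * f θ) 2 (volume.restrict (Ioc (-π) π)) :=
    hf'.sub (hf.const_mul _)
  have key := norm_integral_mul_conj_le_of_commutator hf hv
    (by fun_prop) Complex.norm_exp_I_mul_ofReal
    (by simpa only [Complex.skew_sub_ofReal_mul_I_mul] using hskew)
    (by simpa only [Complex.commutator_sub_ofReal_mul_I_mul] using hcomm) a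
  have hb := integral_norm_sub_sq_le_of_skew hf hf' hskew b
  simp only [intervalIntegral.integral_of_le hpi, ge_iff_le]
  calc 1 / 2 * ‖∫ θ in Ioc (-π) π, Complex.exp (Complex.I * θ) * f θ * conj (f θ)‖
      ≤ (∫ θ in Ioc (-π) π, ‖Complex.exp (Complex.I * θ) * f θ - a * f θ‖ ^ 2) ^ (1 / 2 : ℝ)
        * (∫ θ in Ioc (-π) π, ‖f' θ - b.im * Complex.I * f θ‖ ^ 2) ^ (1 / 2 : ℝ) := by
        linarith
    _ ≤ _ := by gcongr

/-- The Breitenberger uncertainty principle on the circle: for `f ∈ L²(-π,π)`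
absolutely continuous (given as the integral of its derivative `f'`), periodic,
with `f' ∈ L²(-π,π)` and `f ≠ 0`,
`‖(e^{iθ} - a) f‖₂ ‖(d/dθ - b) f‖₂ ≥ (1/2) |⟨e^{iθ} f, f⟩|`. -/
theorem breitenberger_uncertainty
    (f f' : ℝ → ℂ)
    (hAC : ∀ θ ∈ Set.Icc (-π) π, f θ = f (-π) + ∫ t in (-π)..θ, f' t)
    (hf' : MemLp f' 2 (volume.restrict (Set.Ioc (-π) π)))
    (hper : f (-π) = f π)
    (hne : ∃ θ ∈ Set.Icc (-π) π, f θ ≠ 0)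
    (a b : ℂ) :
    (∫ θ in (-π)..π, ‖Complex.exp (Complex.I * θ) * f θ - a * f θ‖ ^ 2) ^ ((1 : ℝ) / 2)
      * (∫ θ in (-π)..π, ‖f' θ - b * f θ‖ ^ 2) ^ ((1 : ℝ) / 2)
    ≥ (1 / 2) * ‖∫ θ in (-π)..π,
        Complex.exp (Complex.I * θ) * f θ * (starRingEnd ℂ) (f θ)‖ :=
  breitenberger_uncertainty_general f f' hAC hf' hper a b
end

section
/- For every f in the Schwartz space (or f ∈ L²(ℝ) with f' ∈ L² and xf ∈ L²), f ≠ 0, and all a, b ∈ ℂ: ‖(d/dx - a)f‖₂ · ‖(x - b)f‖₂ ≥ (1/2)‖f‖₂². -/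
/-!
Integrating `((x - β) ‖f x‖²)' = ‖f x‖² + 2 ⟪(x - β) f x, f' x⟫` over the line gives
`‖f‖₂² = -2 ∫ ⟪(x - β) f, f'⟫`, and Cauchy–Schwarz bounds the right side by
`2 ‖(x - β) f‖₂ ‖f'‖₂`. Since `iγ f` is pointwise orthogonal to `f` over `ℝ`, the same holds
with `f'` replaced by `f' - iγ f`. General centers reduce to this case, as replacing `b` by
`Re b` and `a` by `i Im a` can only decrease both factors: `|x - b| ≥ |x - Re b|`, and
`‖f' - a f‖₂² = ‖f' - i Im a f‖₂² + (Re a)² ‖f‖₂²` because `∫ ⟪f, f'⟫ = ½ ∫ (‖f‖²)' = 0`.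
-/

open MeasureTheory
open scoped RealInnerProductSpace

section L2

variable {α E : Type*} [MeasurableSpace α] {μ : Measure α}
  [NormedAddCommGroup E] [InnerProductSpace ℝ E] {u v : α → E}

theorem MeasureTheory.MemLp.integrable_inner (hu : MemLp u 2 μ) (hv : MemLp v 2 μ) :
    Integrable (fun x => ⟪u x, v x⟫) μ :=
  (L2.integrable_inner (𝕜 := ℝ) hu.toLp hv.toLp).congr <| by
    filter_upwards [hu.coeFn_toLp, hv.coeFn_toLp] with x hux hvx
    rw [hux, hvx]

theorem MeasureTheory.MemLp.abs_integral_inner_le (hu : MemLp u 2 μ) (hv : MemLp v 2 μ) :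
    |∫ x, ⟪u x, v x⟫ ∂μ| ≤
      (∫ x, ‖u x‖ ^ 2 ∂μ) ^ (1 / 2 : ℝ) * (∫ x, ‖v x‖ ^ 2 ∂μ) ^ (1 / 2 : ℝ) := by
  have holder := integral_mul_norm_le_Lp_mul_Lq Real.HolderConjugate.two_two
    (by simpa using hu) (by simpa using hv)
  simp only [Real.rpow_two] at holder
  calc |∫ x, ⟪u x, v x⟫ ∂μ| ≤ ∫ x, |⟪u x, v x⟫| ∂μ := abs_integral_le_integral_abs
    _ ≤ ∫ x, ‖u x‖ * ‖v x‖ ∂μ :=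
      integral_mono_of_nonneg (.of_forall fun _ => abs_nonneg _)
        (hu.norm.integrable_mul hv.norm) (.of_forall fun _ => abs_real_inner_le_norm _ _)
    _ ≤ _ := holder

end L2

section Line

variable {E : Type*} [NormedAddCommGroup E] [InnerProductSpace ℝ E] {f f' : ℝ → E}

theorem integral_inner_deriv_eq_zero (hderiv : ∀ x, HasDerivAt f (f' x) x)
    (hf : MemLp f 2) (hf' : MemLp f' 2) : ∫ x, ⟪f x, f' x⟫ = 0 := by
  have h := integral_eq_zero_of_hasDerivAt_of_integrable (fun x => (hderiv x).norm_sq)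
    ((hf.integrable_inner hf').const_mul 2) (hf.integrable_norm_pow two_ne_zero)
  rwa [integral_const_mul, mul_eq_zero, or_iff_right two_ne_zero] at h

theorem integral_norm_sq_eq_neg_two_mul_integral_inner (β : ℝ)
    (hderiv : ∀ x, HasDerivAt f (f' x) x) (hf : MemLp f 2) (hf' : MemLp f' 2)
    (hxf : MemLp (fun x => (x - β) • f x) 2) :
    ∫ x, ‖f x‖ ^ 2 = -2 * ∫ x, ⟪(x - β) • f x, f' x⟫ := by
  have hderiv' (x : ℝ) : HasDerivAt (fun x => ⟪(x - β) • f x, f x⟫)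
      (‖f x‖ ^ 2 + 2 * ⟪(x - β) • f x, f' x⟫) x := by
    simp only [real_inner_smul_left, real_inner_self_eq_norm_sq]
    exact (((hasDerivAt_id' x).sub_const β).fun_mul (hderiv x).norm_sq).congr_deriv (by ring)
  have hnorm_sq := hf.integrable_norm_pow two_ne_zero
  have hinner := (hxf.integrable_inner hf').const_mul 2
  have h := integral_eq_zero_of_hasDerivAt_of_integrable hderiv' (hnorm_sq.add hinner)
    (hxf.integrable_inner hf)
  rw [integral_add hnorm_sq hinner, integral_const_mul] at h
  linarith

end Line

section Complex

open Complex

theorem Complex.real_inner_ofReal_mul_I_mul_eq_zero (γ : ℝ) (z : ℂ) : ⟪z, γ * I * z⟫ = 0 := by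
  simp only [Complex.inner, mul_re, mul_im, ofReal_re, ofReal_im, I_re, I_im, conj_re, conj_im]
  ring

variable {f f' : ℝ → ℂ}

theorem heisenberg_uncertainty_of_real_centers (β γ : ℝ)
    (hderiv : ∀ x, HasDerivAt f (f' x) x) (hf : MemLp f 2) (hf' : MemLp f' 2)
    (hxf : MemLp (fun x => (x - β) • f x) 2) :
    (1 / 2) * ∫ x, ‖f x‖ ^ 2 ≤
      (∫ x, ‖f' x - γ * I * f x‖ ^ 2) ^ (1 / 2 : ℝ) *
        (∫ x, ‖(x - β) • f x‖ ^ 2) ^ (1 / 2 : ℝ) := by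
  have horth (x : ℝ) : ⟪(x - β) • f x, f' x - γ * I * f x⟫ = ⟪(x - β) • f x, f' x⟫ := by
    simp only [inner_sub_right, real_inner_smul_left, real_inner_ofReal_mul_I_mul_eq_zero, mul_zero,
      sub_zero]
  calc (1 / 2) * ∫ x, ‖f x‖ ^ 2 = -∫ x, ⟪(x - β) • f x, f' x - γ * I * f x⟫ := by
        rw [integral_norm_sq_eq_neg_two_mul_integral_inner β hderiv hf hf' hxf]
        simp only [horth]
        ring
    _ ≤ |∫ x, ⟪(x - β) • f x, f' x - γ * I * f x⟫| := neg_le_abs _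
    _ ≤ _ :=
      (hxf.abs_integral_inner_le (hf'.sub (hf.const_mul (γ * I)))).trans_eq (mul_comm _ _)

theorem integral_norm_sq_deriv_sub_mul_eq (a : ℂ)
    (hderiv : ∀ x, HasDerivAt f (f' x) x) (hf : MemLp f 2) (hf' : MemLp f' 2) :
    ∫ x, ‖f' x - a * f x‖ ^ 2 =
      (∫ x, ‖f' x - a.im * I * f x‖ ^ 2) + a.re ^ 2 * ∫ x, ‖f x‖ ^ 2 := by
  have hpoint (x : ℝ) : ‖f' x - a * f x‖ ^ 2 =
      ‖f' x - a.im * I * f x‖ ^ 2 + (a.re ^ 2 * ‖f x‖ ^ 2 - 2 * a.re * ⟪f x, f' x⟫) := by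
    simp only [Complex.sq_norm, normSq_apply, Complex.inner, sub_re, sub_im, mul_re, mul_im,
      ofReal_re, ofReal_im, I_re, I_im, conj_re, conj_im]
    ring
  have hw : Integrable (fun x => ‖f' x - a.im * I * f x‖ ^ 2) :=
    (hf'.sub (hf.const_mul _)).integrable_norm_pow two_ne_zero
  have hg := hf.integrable_norm_pow two_ne_zero
  have hfi := hf.integrable_inner hf'
  have hrest : Integrable (fun x => a.re ^ 2 * ‖f x‖ ^ 2 - 2 * a.re * ⟪f x, f' x⟫) :=
    (hg.const_mul _).sub (hfi.const_mul _)
  rw [integral_congr_ae (.of_forall hpoint), integral_add hw hrest,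
    integral_sub (hg.const_mul _) (hfi.const_mul _), integral_const_mul, integral_const_mul,
    integral_inner_deriv_eq_zero hderiv hf hf']
  ring

end Complex

theorem heisenberg_uncertainty_general
    (f f' : ℝ → ℂ)
    (hderiv : ∀ x : ℝ, HasDerivAt f (f' x) x)
    (hf : MemLp f 2 (volume : Measure ℝ))
    (hf' : MemLp f' 2 (volume : Measure ℝ))
    (hxf : MemLp (fun x : ℝ => (x : ℂ) * f x) 2 (volume : Measure ℝ))
    (a b : ℂ) :
    (∫ x : ℝ, ‖f' x - a * f x‖ ^ 2) ^ ((1 : ℝ) / 2)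
      * (∫ x : ℝ, ‖(x : ℂ) * f x - b * f x‖ ^ 2) ^ ((1 : ℝ) / 2)
    ≥ (1 / 2) * ∫ x : ℝ, ‖f x‖ ^ 2 := by
  have hxbf : MemLp (fun x : ℝ => (x : ℂ) * f x - b * f x) 2 := hxf.sub (hf.const_mul b)
  have hxβf : MemLp (fun x : ℝ => (x - b.re) • f x) 2 :=
    (hxf.sub (hf.const_mul (b.re : ℂ))).ae_eq <| .of_forall fun x => by
      simp [Complex.real_smul, sub_mul]
  have hmomentum : ∫ x, ‖f' x - a.im * Complex.I * f x‖ ^ 2 ≤ ∫ x, ‖f' x - a * f x‖ ^ 2 := by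
    rw [integral_norm_sq_deriv_sub_mul_eq a hderiv hf hf']
    exact le_add_of_nonneg_right <|
      mul_nonneg (sq_nonneg _) (integral_nonneg fun x => sq_nonneg ‖f x‖)
  have hposition : ∫ x, ‖(x - b.re) • f x‖ ^ 2 ≤ ∫ x : ℝ, ‖(x : ℂ) * f x - b * f x‖ ^ 2 := by
    refine integral_mono (hxβf.integrable_norm_pow two_ne_zero)
      (hxbf.integrable_norm_pow two_ne_zero) fun x => ?_
    rw [← sub_mul, norm_smul, norm_mul, Real.norm_eq_abs]
    gcongr
    simpa using Complex.abs_re_le_norm ((x : ℂ) - b)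
  calc (1 / 2) * ∫ x, ‖f x‖ ^ 2
      ≤ (∫ x, ‖f' x - a.im * Complex.I * f x‖ ^ 2) ^ (1 / 2 : ℝ) *
          (∫ x, ‖(x - b.re) • f x‖ ^ 2) ^ (1 / 2 : ℝ) :=
        heisenberg_uncertainty_of_real_centers b.re a.im hderiv hf hf' hxβf
    _ ≤ _ := by gcongr

/-- The Heisenberg uncertainty principle on the line, with arbitrary complex
centers: for `f ∈ L²(ℝ)` differentiable with `f' ∈ L²` and `x f ∈ L²`, `f ≠ 0`,
`‖(d/dx - a) f‖₂ ‖(x - b) f‖₂ ≥ (1/2) ‖f‖₂²`. -/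
theorem heisenberg_uncertainty
    (f f' : ℝ → ℂ)
    (hderiv : ∀ x : ℝ, HasDerivAt f (f' x) x)
    (hf : MemLp f 2 (volume : Measure ℝ))
    (hf' : MemLp f' 2 (volume : Measure ℝ))
    (hxf : MemLp (fun x : ℝ => (x : ℂ) * f x) 2 (volume : Measure ℝ))
    (hne : f ≠ 0) (a b : ℂ) :
    (∫ x : ℝ, ‖f' x - a * f x‖ ^ 2) ^ ((1 : ℝ) / 2)
      * (∫ x : ℝ, ‖(x : ℂ) * f x - b * f x‖ ^ 2) ^ ((1 : ℝ) / 2)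
    ≥ (1 / 2) * ∫ x : ℝ, ‖f x‖ ^ 2 :=
  heisenberg_uncertainty_general f f' hderiv hf hf' hxf a b
end
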